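/- If ⟨−⟩ : C → O is a balanced contraction on a balanced braided monoidal category C, then ⟨θ_{X⊗Y}⟩ = id_{⟨X,Y⟩} for all objects X, Y, and in particular ⟨θ_X⟩ = id_{⟨X⟩} for all X. -/

import Mathlib

/-!
Naturality of the braiding lets one write `θ_{X⊗Y}` as the composite of the two twisted
braidings `β_{X,Y} (θ_Y ⊗ 1)` and `β_{Y,X} (θ_X ⊗ 1)`; a balanced contraction sends each to a
transport along `⟨X⊗Y⟩ = ⟨Y⊗X⟩`, and the two transports cancel. For a single object, naturality
of `θ` along `X ⊗ 𝟙 ≅ X` transfers the identity from `⟨θ_{X⊗𝟙}⟩` to `⟨θ_X⟩`.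
-/

open CategoryTheory MonoidalCategory

universe u v w x

variable (C : Type u) [Category.{v} C] [MonoidalCategory C] [BraidedCategory C]

/-- A balanced structure on a braided monoidal category: a natural family of
automorphisms `θ_X` with `θ_{X⊗Y} = (θ_X ⊗ θ_Y) β_{Y,X} β_{X,Y}`. -/
structure Balance where
  θ : ∀ X : C, X ≅ X
  natural : ∀ {X Y : C} (f : X ⟶ Y), f ≫ (θ Y).hom = (θ X).hom ≫ f
  tensor : ∀ X Y : C,
    (θ (X ⊗ Y)).hom = (β_ X Y).hom ≫ (β_ Y X).hom ≫ ((θ X).hom ⊗ₘ (θ Y).hom)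

variable {C} {O : Type w} [Category.{x} O]

/-- A (balanced) contraction on a balanced braided monoidal category: a functor
`⟨-⟩ : C ⥤ O` with `⟨Y⊗X⟩ = ⟨X⊗Y⟩`, `⟨(θ_Y ⊗ id_X) β_{X,Y}⟩ = id`,
`⟨(X⊗Y)⊗Z⟩ = ⟨X⊗(Y⊗Z)⟩` and `⟨a_{X,Y,Z}⟩ = id`. -/
structure IsBalancedContraction (bal : Balance C) (F : C ⥤ O) : Prop where
  obj_swap : ∀ X Y : C, F.obj (X ⊗ Y) = F.obj (Y ⊗ X)
  map_braid : ∀ X Y : C,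
    F.map ((β_ X Y).hom ≫ ((bal.θ Y).hom ⊗ₘ 𝟙 X)) = eqToHom (obj_swap X Y)
  obj_assoc : ∀ X Y Z : C, F.obj ((X ⊗ Y) ⊗ Z) = F.obj (X ⊗ (Y ⊗ Z))
  map_assoc : ∀ X Y Z : C, F.map (α_ X Y Z).hom = eqToHom (obj_assoc X Y Z)

namespace Balance

variable (bal : Balance C)

theorem theta_tensor_hom_eq_comp_twisted_braiding (X Y : C) :
    (bal.θ (X ⊗ Y)).hom =
      ((β_ X Y).hom ≫ ((bal.θ Y).hom ⊗ₘ 𝟙 X)) ≫ ((β_ Y X).hom ≫ ((bal.θ X).hom ⊗ₘ 𝟙 Y)) := by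
  rw [bal.tensor, tensorHom_def', tensorHom_id, tensorHom_id, Category.assoc,
    BraidedCategory.braiding_naturality_left_assoc, whisker_exchange]

theorem map_theta_hom_eq_id_of_iso {F : C ⥤ O} {X Y : C} (e : X ≅ Y)
    (h : F.map (bal.θ X).hom = 𝟙 (F.obj X)) : F.map (bal.θ Y).hom = 𝟙 (F.obj Y) := by
  rw [← cancel_epi (F.map e.hom), ← F.map_comp, bal.natural, F.map_comp, h,
    Category.id_comp, Category.comp_id]

end Balance

theorem IsBalancedContraction.map_theta_tensor {bal : Balance C} {F : C ⥤ O}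
    (hF : IsBalancedContraction bal F) (X Y : C) :
    F.map (bal.θ (X ⊗ Y)).hom = 𝟙 (F.obj (X ⊗ Y)) := by
  rw [bal.theta_tensor_hom_eq_comp_twisted_braiding, F.map_comp, hF.map_braid, hF.map_braid,
    eqToHom_trans, eqToHom_refl]

/-- A balanced contraction kills the balance: `⟨θ_{X⊗Y}⟩ = id_{⟨X,Y⟩}` for all `X, Y`,
and in particular `⟨θ_X⟩ = id_{⟨X⟩}` for all `X`. -/
theorem balancedContraction_theta (bal : Balance C) (F : C ⥤ O)
    (hF : IsBalancedContraction bal F) :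
    (∀ X Y : C, F.map (bal.θ (X ⊗ Y)).hom = 𝟙 (F.obj (X ⊗ Y))) ∧
    (∀ X : C, F.map (bal.θ X).hom = 𝟙 (F.obj X)) :=
  ⟨hF.map_theta_tensor, fun X => bal.map_theta_hom_eq_id_of_iso (ρ_ X) (hF.map_theta_tensor X (𝟙_ C))⟩
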